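/- arXiv:2603.00899 — 3 statements merged into one kernel-verified Lean document; each statement's English description precedes it below -/
import Mathlib

section
/- Let G be a simple graph on a finite vertex set V, let i ∈ V be a vertex of degree 1 whose unique neighbor is j, and let A ∈ S(G). Set B = A(i). Then i is an upper index of A if and only if j is a downer index of B; that is, null(A(i)) = null(A) + 1 if and only if null(B(j)) = null(B) − 1 (where B(j) is the principal submatrix of A obtained by deleting rows and columns i and j). -/
/-!
Let `M` be symmetric and `k` an index. Extension by zero embeds `ker M(k)` in the space of
`ker M`, and both contain `W = ker M ∩ {x | x k = 0}` with codimension at most one: `ker M` is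
larger iff some `x ∈ ker M` has `x k ≠ 0` (the nullity drops on deleting `k`), and the copy of
`ker M(k)` is larger iff some `y` in it has `(M y) k ≠ 0` (the nullity rises). Symmetry,
`⟨x, M y⟩ = ⟨M x, y⟩`, rules out both at once.

If row `i` of `M` is supported on `{i, j}` with `M i j ≠ 0`, then `(M y) i = M i j * y j` for
`y` in the copy of `ker M(i)`, so the rising condition for `i` in `M` is exactly the dropping
condition for `j` in `M(i)`.
-/

open Matrix

variable {V : Type*} [Fintype V] [DecidableEq V]

/-- The nullity of a real matrix: the dimension of its kernel. -/
noncomputable def nullity (A : Matrix V V ℝ) : ℕ :=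
  Module.finrank ℝ (LinearMap.ker A.mulVecLin)

/-- `delRC A i` is the principal submatrix of `A` obtained by deleting row and column `i`. -/
def delRC (A : Matrix V V ℝ) (i : V) : Matrix {j // j ≠ i} {j // j ≠ i} ℝ :=
  A.submatrix Subtype.val Subtype.val

/-- `A ∈ S(G)`: `A` is symmetric and its off-diagonal entries are nonzero precisely at edges. -/
def InS (G : SimpleGraph V) (A : Matrix V V ℝ) : Prop :=
  A.IsSymm ∧ ∀ j k : V, j ≠ k → (A j k ≠ 0 ↔ G.Adj j k)

/-- The i-strong nullity interlacing property. -/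
def HasSNIP (A : Matrix V V ℝ) (i : V) : Prop :=
  ∀ X : Matrix V V ℝ, X.IsSymm → (∀ j k, A j k * X j k = 0) → (∀ j, X j j = 0) →
    (∀ j k, j ≠ i → (A * X) j k = 0) → X = 0

/-- The Strong Arnold Property. -/
def HasSAP (A : Matrix V V ℝ) : Prop :=
  ∀ X : Matrix V V ℝ, X.IsSymm → (∀ j k, A j k * X j k = 0) → (∀ j, X j j = 0) →
    A * X = 0 → X = 0

/-- The parameter ξξ(G,i): the maximum of k+ℓ over pairs k ≤ ℓ such that (G,i)
allows the nullity pair (k,ℓ) with i-SNIP. -/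
noncomputable def xixi (G : SimpleGraph V) (i : V) : ℕ :=
  sSup {s | ∃ k ℓ : ℕ, k ≤ ℓ ∧ s = k + ℓ ∧ ∃ A : Matrix V V ℝ,
    InS G A ∧ HasSNIP A i ∧ nullity A = k ∧ nullity (delRC A i) = ℓ}

open Module

theorem Submodule.finrank_inf_ker_add_one {K E : Type*} [Field K] [AddCommGroup E] [Module K E]
    [FiniteDimensional K E] {W : Submodule K E} {f : Dual K E} (h : ¬W ≤ LinearMap.ker f) :
    finrank K ↥(W ⊓ LinearMap.ker f) + 1 = finrank K W := by
  have hf : f.domRestrict W ≠ 0 := by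
    contrapose! h
    exact fun x hx => LinearMap.congr_fun h ⟨x, hx⟩
  rw [← Dual.finrank_ker_add_one_of_ne_zero hf, LinearMap.ker_domRestrict,
    ← (Submodule.comapSubtypeEquivOfLe (inf_le_left : W ⊓ LinearMap.ker f ≤ W)).finrank_eq,
    Submodule.comap_inf, Submodule.comap_subtype_self, top_inf_eq]

theorem Submodule.finrank_eq_finrank_inf_ker_add {K E : Type*} [Field K] [AddCommGroup E]
    [Module K E] [FiniteDimensional K E] (W : Submodule K E) (f : Dual K E)
    [Decidable (W ≤ LinearMap.ker f)] :
    finrank K W = finrank K ↥(W ⊓ LinearMap.ker f) + if W ≤ LinearMap.ker f then 0 else 1 := by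
  split_ifs with h
  · rw [inf_eq_left.mpr h, add_zero]
  · exact (finrank_inf_ker_add_one h).symm

section PrincipalSubmatrix

variable {n : Type*} [Fintype n] [DecidableEq n]

noncomputable def extendByZero (k : n) : ({l // l ≠ k} → ℝ) →ₗ[ℝ] n → ℝ :=
  Function.ExtendByZero.linearMap ℝ Subtype.val

omit [Fintype n] [DecidableEq n] in
@[simp]
lemma extendByZero_apply_val {k : n} (y : {l // l ≠ k} → ℝ) (l : {l // l ≠ k}) :
    extendByZero k y l = y l :=
  Subtype.val_injective.extend_apply _ _ _

omit [Fintype n] [DecidableEq n] in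
@[simp]
lemma extendByZero_apply_self (k : n) (y : {l // l ≠ k} → ℝ) : extendByZero k y k = 0 :=
  Function.extend_apply' _ _ _ fun ⟨l, hl⟩ => l.prop hl

omit [Fintype n] [DecidableEq n] in
lemma extendByZero_injective (k : n) : Function.Injective (extendByZero k) :=
  fun y z h => funext fun l => by simpa using congr_fun h l

omit [Fintype n] [DecidableEq n] in
lemma extendByZero_restrict {k : n} {x : n → ℝ} (hx : x k = 0) :
    extendByZero k (fun l => x l) = x := by
  funext m
  by_cases hm : m = k
  · subst hm; simp [hx]
  · exact extendByZero_apply_val (k := k) (fun l => x l) ⟨m, hm⟩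

lemma mulVec_extendByZero (M : Matrix n n ℝ) (k : n) (y : {l // l ≠ k} → ℝ) (m : n) :
    (M *ᵥ extendByZero k y) m = ∑ l : {l // l ≠ k}, M m l * y l := by
  simp [mulVec, dotProduct, Fintype.sum_eq_add_sum_subtype_ne _ k]

omit [Fintype n] [DecidableEq n] in
lemma Matrix.IsSymm.delRC {M : Matrix n n ℝ} (hM : M.IsSymm) (k : n) : (delRC M k).IsSymm :=
  hM.submatrix _

lemma delRC_mulVec (M : Matrix n n ℝ) (k : n) (y : {l // l ≠ k} → ℝ) (l : {l // l ≠ k}) :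
    (delRC M k *ᵥ y) l = (M *ᵥ extendByZero k y) l := by
  rw [mulVec_extendByZero]
  rfl

noncomputable def delRCKer (M : Matrix n n ℝ) (k : n) : Submodule ℝ (n → ℝ) :=
  (LinearMap.ker (delRC M k).mulVecLin).map (extendByZero k)

lemma nullity_delRC_eq_finrank_delRCKer (M : Matrix n n ℝ) (k : n) :
    nullity (delRC M k) = finrank ℝ (delRCKer M k) :=
  (Submodule.equivMapOfInjective _ (extendByZero_injective k) _).finrank_eq

lemma mem_delRCKer_iff {M : Matrix n n ℝ} {k : n} {x : n → ℝ} :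
    x ∈ delRCKer M k ↔ x k = 0 ∧ ∀ l ≠ k, (M *ᵥ x) l = 0 := by
  constructor
  · rintro ⟨y, hy, rfl⟩
    refine ⟨extendByZero_apply_self k y, fun l hl => ?_⟩
    rw [← delRC_mulVec M k y ⟨l, hl⟩]
    exact congr_fun hy _
  · rintro ⟨hxk, hx⟩
    refine ⟨fun l => x l, funext fun l => ?_, extendByZero_restrict hxk⟩
    rw [Pi.zero_apply, mulVecLin_apply, delRC_mulVec, extendByZero_restrict hxk]
    exact hx l l.prop

lemma mulVec_eq_smul_single_of_mem_delRCKer {M : Matrix n n ℝ} {k : n} {x : n → ℝ}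
    (hx : x ∈ delRCKer M k) : M *ᵥ x = (M *ᵥ x) k • Pi.single k 1 := by
  funext l
  by_cases hl : l = k
  · subst hl; simp
  · simp [hl, (mem_delRCKer_iff.mp hx).2 l hl]

lemma ker_inf_ker_proj_eq_delRCKer_inf (M : Matrix n n ℝ) (k : n) :
    LinearMap.ker M.mulVecLin ⊓ LinearMap.ker (LinearMap.proj k) =
      delRCKer M k ⊓ LinearMap.ker ((LinearMap.proj k).comp M.mulVecLin) := by
  ext x
  simp only [Submodule.mem_inf, LinearMap.mem_ker, mulVecLin_apply, LinearMap.proj_apply,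
    LinearMap.comp_apply, mem_delRCKer_iff]
  constructor
  · rintro ⟨hx, hxk⟩
    simp [hx, hxk]
  · rintro ⟨⟨hxk, hx⟩, hMxk⟩
    refine ⟨funext fun l => ?_, hxk⟩
    by_cases hl : l = k
    · subst hl; exact hMxk
    · exact hx l hl

lemma delRCKer_le_of_not_ker_le {M : Matrix n n ℝ} (hM : M.IsSymm) {k : n}
    (h : ¬LinearMap.ker M.mulVecLin ≤ LinearMap.ker (LinearMap.proj k)) :
    delRCKer M k ≤ LinearMap.ker ((LinearMap.proj k).comp M.mulVecLin) := by
  obtain ⟨x, hx, hxk⟩ := SetLike.not_le_iff_exists.mp h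
  simp only [LinearMap.mem_ker, mulVecLin_apply, LinearMap.proj_apply] at hx hxk
  intro y hy
  -- `x ⬝ᵥ M y = M x ⬝ᵥ y = 0`, while `M y` is supported at `k`
  have hdot : x ⬝ᵥ M *ᵥ y = 0 := by
    rw [dotProduct_mulVec, ← mulVec_transpose, hM.eq, hx, zero_dotProduct]
  rw [mulVec_eq_smul_single_of_mem_delRCKer hy, dotProduct_smul, dotProduct_single, mul_one,
    smul_eq_mul] at hdot
  simpa [hxk] using hdot

lemma nullity_delRC_add_one_eq_iff_and_eq_add_one_iff {M : Matrix n n ℝ} (hM : M.IsSymm)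
    (k : n) :
    (nullity (delRC M k) + 1 = nullity M ↔
        ¬LinearMap.ker M.mulVecLin ≤ LinearMap.ker (LinearMap.proj k)) ∧
      (nullity (delRC M k) = nullity M + 1 ↔
        ¬delRCKer M k ≤ LinearMap.ker ((LinearMap.proj k).comp M.mulVecLin)) := by
  classical
  have hK := (LinearMap.ker M.mulVecLin).finrank_eq_finrank_inf_ker_add (LinearMap.proj k)
  have hL := (delRCKer M k).finrank_eq_finrank_inf_ker_add ((LinearMap.proj k).comp M.mulVecLin)
  rw [← ker_inf_ker_proj_eq_delRCKer_inf] at hL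
  have hsym := delRCKer_le_of_not_ker_le hM (k := k)
  rw [nullity_delRC_eq_finrank_delRCKer, nullity, hK, hL]
  split_ifs <;> simp_all <;> omega

lemma nullity_delRC_add_one_eq_iff {M : Matrix n n ℝ} (hM : M.IsSymm) (k : n) :
    nullity (delRC M k) + 1 = nullity M ↔ ∃ x, M *ᵥ x = 0 ∧ x k ≠ 0 := by
  rw [(nullity_delRC_add_one_eq_iff_and_eq_add_one_iff hM k).1, SetLike.not_le_iff_exists]
  simp

lemma nullity_delRC_eq_add_one_iff {M : Matrix n n ℝ} (hM : M.IsSymm) (k : n) :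
    nullity (delRC M k) = nullity M + 1 ↔
      ∃ y, delRC M k *ᵥ y = 0 ∧ (M *ᵥ extendByZero k y) k ≠ 0 := by
  rw [(nullity_delRC_add_one_eq_iff_and_eq_add_one_iff hM k).2, SetLike.not_le_iff_exists]
  simp [delRCKer]

theorem nullity_delRC_eq_add_one_iff_of_row_support {A : Matrix n n ℝ} (hA : A.IsSymm)
    {i j : n} (hji : j ≠ i) (hAij : A i j ≠ 0) (hrow : ∀ m, m ≠ i → m ≠ j → A i m = 0) :
    nullity (delRC A i) = nullity A + 1 ↔
      nullity (delRC (delRC A i) ⟨j, hji⟩) + 1 = nullity (delRC A i) := by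
  have hAy : ∀ y : {l // l ≠ i} → ℝ, (A *ᵥ extendByZero i y) i = A i j * y ⟨j, hji⟩ := by
    intro y
    rw [mulVec_extendByZero]
    refine Fintype.sum_eq_single (⟨j, hji⟩ : {l // l ≠ i}) fun m hm => ?_
    rw [hrow m m.prop fun h => hm (Subtype.ext h), zero_mul]
  rw [nullity_delRC_eq_add_one_iff hA, nullity_delRC_add_one_eq_iff (hA.delRC i)]
  simp [hAy, hAij]

end PrincipalSubmatrix

theorem stmt4 (G : SimpleGraph V) (i j : V) (hij : G.Adj i j)
    (huniq : ∀ x, G.Adj i x → x = j)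
    (A : Matrix V V ℝ) (hA : InS G A) :
    nullity (delRC A i) = nullity A + 1 ↔
      nullity (delRC (delRC A i) ⟨j, hij.ne'⟩) + 1 = nullity (delRC A i) :=
  nullity_delRC_eq_add_one_iff_of_row_support hA.1 hij.ne' ((hA.2 i j hij.ne).mpr hij)
    fun m hmi hmj => not_not.mp fun h => hmj (huniq m ((hA.2 i m hmi.symm).mp h))
end

section
/- Let G be a simple graph on a finite vertex set V and A ∈ S(G). Suppose α ⊆ V is a set of vertices such that the principal submatrix A[α] is invertible, and let S = A[αᶜ] − A[αᶜ,α] A[α]⁻¹ A[α,αᶜ] be the Schur complement of A[α] in A, indexed by V∖α. Suppose H is a simple graph on V∖α such that S ∈ S(H) and the set N_G(α)∖α = {v ∈ V∖α : v is adjacent in G to some vertex of α} is a clique in H. Then for any i ∈ V∖α, if A has i-SNIP, S has i-SNIP. -/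
/-! Order `V` as `α` followed by `αᶜ`, so that `A = [[P, B], [Bᵀ, C]]` and
`S = C - Bᵀ P⁻¹ B`. With `E = [-Bᵀ P⁻¹ | 1]` one has `A Eᵀ = [0; S]`, so a matrix `X` that
violates `i`-SNIP for `S` lifts to `Y = Eᵀ X E`, for which `A Y = [0; S X E]` vanishes outside
row `i`. The columns of `B` are supported on `N = N_G(α) ∖ α`, a clique of `H`, so `S ∘ X = 0`
forces `X = 0` on `N × N`. This kills `B X Bᵀ` (the `α`-block of `Y`), `B ∘ (P⁻¹ B X)` and
`C ∘ X`, so `A ∘ Y = 0` and `Y` violates `i`-SNIP for `A` unless `Y = 0`; but `X` is the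
`αᶜ`-block of `Y`. -/

open Matrix

variable {V : Type*} [Fintype V] [DecidableEq V]

namespace Matrix

theorem submatrix_sumCompl_eq_fromBlocks {R ι : Type*} (A : Matrix ι ι R) (p : ι → Prop)
    [DecidablePred p] :
    A.submatrix (Equiv.sumCompl p) (Equiv.sumCompl p) =
      fromBlocks (A.submatrix Subtype.val Subtype.val) (A.submatrix Subtype.val Subtype.val)
        (A.submatrix Subtype.val Subtype.val) (A.submatrix Subtype.val Subtype.val) :=
  (fromBlocks_toBlocks _).symm

section Support

variable {R m n : Type*} [Semiring R] {B : Matrix m n R} {X : Matrix n n R} {N : Set n}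

theorem mul_apply_eq_zero_of_support [Fintype n] (hB : ∀ v k, B v k ≠ 0 → k ∈ N)
    (hX : ∀ j ∈ N, ∀ k ∈ N, X j k = 0) (v : m) {k : n} (hk : k ∈ N) : (B * X) v k = 0 := by
  rw [mul_apply]
  refine Finset.sum_eq_zero fun j _ => ?_
  by_cases hvj : B v j = 0
  · rw [hvj, zero_mul]
  · rw [hX j (hB v j hvj) k hk, mul_zero]

theorem mul_mul_transpose_eq_zero_of_support [Fintype m] [Fintype n]
    (hB : ∀ v k, B v k ≠ 0 → k ∈ N)
    (hX : ∀ j ∈ N, ∀ k ∈ N, X j k = 0) : B * X * Bᵀ = 0 := by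
  ext v w
  rw [mul_apply]
  refine Finset.sum_eq_zero fun k _ => ?_
  by_cases hwk : B w k = 0
  · rw [transpose_apply, hwk, mul_zero]
  · rw [mul_apply_eq_zero_of_support hB hX v (hB w k hwk), zero_mul]

theorem transpose_mul_mul_apply_eq_zero_of_support [Fintype m]
    (hB : ∀ v k, B v k ≠ 0 → k ∈ N) (M : Matrix m m R) {j k : n} (hjk : j ∉ N ∨ k ∉ N) :
    (Bᵀ * M * B) j k = 0 := by
  rcases hjk with hj | hk
  · rw [Matrix.mul_assoc, mul_apply]
    refine Finset.sum_eq_zero fun v _ => ?_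
    rw [transpose_apply, not_imp_comm.mp (hB v j) hj, zero_mul]
  · rw [mul_apply]
    refine Finset.sum_eq_zero fun v _ => ?_
    rw [not_imp_comm.mp (hB v k) hk, mul_zero]

end Support

section BlockAlgebra

variable {R m n : Type*} [CommRing R] [Fintype n] [DecidableEq n]

theorem transpose_fromCols_one_mul_mul (M : Matrix n m R) (X : Matrix n n R) :
    (fromCols M (1 : Matrix n n R))ᵀ * X * fromCols M 1 =
      fromBlocks (Mᵀ * X * M) (Mᵀ * X) (X * M) X := by
  rw [transpose_fromCols, fromRows_mul, fromRows_mul_fromCols]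
  simp

theorem fromBlocks_mul_transpose_fromCols_eq_fromRows_schur [Fintype m] [DecidableEq m]
    {P : Matrix m m R} (hP : IsUnit P.det) (hPs : P.IsSymm) (B : Matrix m n R) (C : Matrix n n R) :
    fromBlocks P B Bᵀ C * (fromCols (-(Bᵀ * P⁻¹)) (1 : Matrix n n R))ᵀ =
      fromRows 0 (C - Bᵀ * P⁻¹ * B) := by
  have hPinv : (P⁻¹)ᵀ = P⁻¹ := by rw [transpose_nonsing_inv, hPs.eq]
  rw [transpose_fromCols, fromBlocks_mul_fromRows, transpose_neg, transpose_mul, hPinv,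
    transpose_transpose]
  congr 1
  · rw [Matrix.mul_neg, ← Matrix.mul_assoc, mul_nonsing_inv P hP, Matrix.one_mul,
      transpose_one, Matrix.mul_one, neg_add_cancel]
  · rw [transpose_one, Matrix.mul_one, Matrix.mul_neg, Matrix.mul_assoc, neg_add_eq_sub]

end BlockAlgebra

end Matrix

omit [DecidableEq V] in
theorem HasSNIP.submatrix_equiv {W : Type*} [Fintype W] {A : Matrix V V ℝ}
    (e : W ≃ V) {i : W} (h : HasSNIP A (e i)) : HasSNIP (A.submatrix e e) i := by
  intro X hXs hHad hdiag hrow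
  have hX : X.submatrix e.symm e.symm = 0 := by
    refine h _ (hXs.submatrix _) (fun j k => ?_) (fun j => hdiag _) (fun j k hj => ?_)
    · simpa using hHad (e.symm j) (e.symm k)
    · have hmul := submatrix_mul_equiv (A.submatrix e e) X e.symm e.symm e.symm
      rw [submatrix_submatrix, e.self_comp_symm, submatrix_id_id] at hmul
      rw [hmul, submatrix_apply]
      exact hrow _ _ (by rwa [ne_eq, Equiv.symm_apply_eq])
  ext j k
  simpa using congr_fun₂ hX (e j) (e k)

section Schur

variable {m n : Type*} [Fintype m] [DecidableEq m] [Fintype n] [DecidableEq n]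
  {P : Matrix m m ℝ} {B : Matrix m n ℝ} {C : Matrix n n ℝ} {i : n}

theorem eq_zero_of_hasSNIP_fromBlocks (hP : IsUnit P.det) (hPs : P.IsSymm)
    (h : HasSNIP (fromBlocks P B Bᵀ C) (Sum.inr i)) {X : Matrix n n ℝ} (hXs : X.IsSymm)
    (hBXB : B * X * Bᵀ = 0) (hBX : ∀ v k, B v k * (P⁻¹ * B * X) v k = 0)
    (hCX : ∀ j k, C j k * X j k = 0) (hdiag : ∀ j, X j j = 0)
    (hrow : ∀ j k, j ≠ i → ((C - Bᵀ * P⁻¹ * B) * X) j k = 0) : X = 0 := by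
  set E := fromCols (-(Bᵀ * P⁻¹)) (1 : Matrix n n ℝ)
  have hPinv : (P⁻¹)ᵀ = P⁻¹ := by rw [transpose_nonsing_inv, hPs.eq]
  have hY : Eᵀ * X * E = fromBlocks 0 (-(P⁻¹ * B * X)) (-(P⁻¹ * B * X))ᵀ X := by
    rw [transpose_fromCols_one_mul_mul]
    have hM : (-(Bᵀ * P⁻¹))ᵀ = -(P⁻¹ * B) := by
      rw [transpose_neg, transpose_mul, hPinv, transpose_transpose]
    congr 1
    · rw [hM, Matrix.neg_mul, Matrix.neg_mul, Matrix.mul_neg, neg_neg,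
        show P⁻¹ * B * X * (Bᵀ * P⁻¹) = P⁻¹ * (B * X * Bᵀ) * P⁻¹ by simp only [Matrix.mul_assoc],
        hBXB, Matrix.mul_zero, Matrix.zero_mul]
    · rw [hM, Matrix.neg_mul]
    · rw [transpose_neg, transpose_mul, transpose_mul, hXs.eq, hPinv, Matrix.mul_neg]
  have hAY : fromBlocks P B Bᵀ C * (Eᵀ * X * E) = fromRows 0 ((C - Bᵀ * P⁻¹ * B) * X * E) := by
    rw [← Matrix.mul_assoc, ← Matrix.mul_assoc,
      fromBlocks_mul_transpose_fromCols_eq_fromRows_schur hP hPs, fromRows_mul, fromRows_mul,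
      Matrix.zero_mul, Matrix.zero_mul]
  have hY0 : Eᵀ * X * E = 0 := by
    refine h _ ?_ ?_ ?_ ?_
    · rw [IsSymm, transpose_mul, transpose_mul, transpose_transpose, hXs.eq, Matrix.mul_assoc]
    · rw [hY]
      rintro (v | k) (w | l)
      · simp
      · simpa using hBX v l
      · simpa only [fromBlocks_apply₂₁, transpose_apply, Matrix.neg_apply, mul_neg, neg_eq_zero]
          using hBX w k
      · simpa using hCX k l
    · rw [hY]
      rintro (v | k) <;> simp [hdiag]
    · rw [hAY]
      rintro (v | j) k hj
      · rfl
      · rw [fromRows_apply_inr, mul_apply]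
        exact Finset.sum_eq_zero fun l _ => by rw [hrow j l (by simpa using hj), zero_mul]
  ext j k
  simpa [hY] using congr_fun₂ hY0 (Sum.inr j) (Sum.inr k)

theorem HasSNIP.schur_of_fromBlocks (hP : IsUnit P.det) (hPs : P.IsSymm) {N : Set n}
    (hB : ∀ v k, B v k ≠ 0 → k ∈ N)
    (hN : ∀ j ∈ N, ∀ k ∈ N, j ≠ k → (C - Bᵀ * P⁻¹ * B) j k ≠ 0)
    (h : HasSNIP (fromBlocks P B Bᵀ C) (Sum.inr i)) : HasSNIP (C - Bᵀ * P⁻¹ * B) i := by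
  intro X hXs hHad hdiag hrow
  have hXN : ∀ j ∈ N, ∀ k ∈ N, X j k = 0 := by
    intro j hj k hk
    by_cases hjk : j = k
    · exact hjk ▸ hdiag j
    · exact (mul_eq_zero.mp (hHad j k)).resolve_left (hN j hj k hk hjk)
  refine eq_zero_of_hasSNIP_fromBlocks hP hPs h hXs
    (mul_mul_transpose_eq_zero_of_support hB hXN) (fun v k => ?_) (fun j k => ?_) hdiag hrow
  · by_cases hvk : B v k = 0
    · rw [hvk, zero_mul]
    · rw [Matrix.mul_assoc, mul_apply, Finset.sum_eq_zero fun w _ => by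
        rw [mul_apply_eq_zero_of_support hB hXN w (hB v k hvk), mul_zero], mul_zero]
  · by_cases hjk : X j k = 0
    · rw [hjk, mul_zero]
    · have hBPB : (Bᵀ * P⁻¹ * B) j k = 0 :=
        transpose_mul_mul_apply_eq_zero_of_support hB _ <| by
          by_contra! hjkN
          exact hjk (hXN j hjkN.1 k hjkN.2)
      simpa [hBPB] using hHad j k

end Schur

theorem stmt9 (G : SimpleGraph V) (A : Matrix V V ℝ) (α : Finset V)
    (H : SimpleGraph {x // x ∉ α})
    (hA : InS G A)
    (hinv : IsUnit (A.submatrix (Subtype.val : {x // x ∈ α} → V)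
      (Subtype.val : {x // x ∈ α} → V)))
    (S : Matrix {x // x ∉ α} {x // x ∉ α} ℝ)
    (hS : S = A.submatrix (Subtype.val : {x // x ∉ α} → V)
        (Subtype.val : {x // x ∉ α} → V) -
      A.submatrix (Subtype.val : {x // x ∉ α} → V) (Subtype.val : {x // x ∈ α} → V) *
      (A.submatrix (Subtype.val : {x // x ∈ α} → V) (Subtype.val : {x // x ∈ α} → V))⁻¹ *
      A.submatrix (Subtype.val : {x // x ∈ α} → V) (Subtype.val : {x // x ∉ α} → V))
    (hSH : InS H S)
    (hclique : H.IsClique {v : {x // x ∉ α} | ∃ u ∈ α, G.Adj (v : V) u})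
    (i : {x // x ∉ α})
    (hSNIP : HasSNIP A (i : V)) : HasSNIP S i := by
  obtain ⟨hAs, hAG⟩ := hA
  have hD :
      A.submatrix (Subtype.val : {x // x ∉ α} → V) (Subtype.val : {x // x ∈ α} → V) =
        (A.submatrix (Subtype.val : {x // x ∈ α} → V) (Subtype.val : {x // x ∉ α} → V))ᵀ := by
    rw [transpose_submatrix, hAs.eq]
  have hblocks := submatrix_sumCompl_eq_fromBlocks A (· ∈ α)
  rw [hD] at hS hblocks
  subst hS
  refine HasSNIP.schur_of_fromBlocks ((isUnit_iff_isUnit_det _).mp hinv) (hAs.submatrix _)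
    (N := {v | ∃ u ∈ α, G.Adj (v : V) u}) (fun v k hvk => ?_) (fun j hj k hk hjk => ?_)
    (hblocks ▸ hSNIP.submatrix_equiv (Equiv.sumCompl (· ∈ α)))
  · exact ⟨v, v.2, ((hAG v k fun h => k.2 (h ▸ v.2)).mp hvk).symm⟩
  · exact (hSH.2 j k hjk).mpr (hclique hj hk hjk)
end

section
/- Let (G,i) be a rooted graph on a finite vertex set V and let A ∈ S(G). Let K = {x ∈ ℝ^V : (Ax)_j = 0 for all j ≠ i} be the right kernel of the matrix A with row i deleted, and let m = dim K. Then A has i-SNIP if and only if for every V×m real matrix N whose columns form a basis of K, with rows denoted u_jᵀ (j ∈ V), the set of symmetric m×m matrices consisting of the vertex ingredients u_j u_jᵀ for j ∈ V together with the edge ingredients u_j u_kᵀ + u_k u_jᵀ for edges {j,k} of G spans the entire space of m×m real symmetric matrices. -/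
open Matrix

variable {V : Type*} [Fintype V] [DecidableEq V]

/-- `N` gives a full recipe from `G`: the vertex ingredients `uⱼuⱼᵀ` and edge ingredients
`uⱼuₖᵀ + uₖuⱼᵀ` (where `uⱼᵀ` is row `j` of `N`) span all real symmetric `m × m` matrices. -/
def GivesFullRecipe {m : ℕ} (G : SimpleGraph V) (N : Matrix V (Fin m) ℝ) : Prop :=
  ∀ M : Matrix (Fin m) (Fin m) ℝ, M.IsSymm →
    M ∈ Submodule.span ℝ
      ({P : Matrix (Fin m) (Fin m) ℝ | ∃ j : V, P = Matrix.of fun a b => N j a * N j b} ∪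
       {P : Matrix (Fin m) (Fin m) ℝ | ∃ j k : V, G.Adj j k ∧
          P = Matrix.of fun a b => N j a * N k b + N k a * N j b})

/-!
For `j ≠ i` the condition `(AX)_{jk} = 0` says that every column of `X` lies in `K`. If the
columns of `N` form a basis of `K`, the symmetric matrices with all columns in `K` are exactly
the `X = N M Nᵀ` with `M` symmetric, and `X_{jk} = tr (Mᵀ uⱼ uₖᵀ)`. For `A ∈ S(G)` the remaining
conditions `A ∘ X = I ∘ X = O` say that `X` vanishes on the diagonal and on the edges of `G`,
i.e. that `M` is Frobenius-orthogonal to every ingredient. So `i`-SNIP says that no nonzero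
symmetric matrix is orthogonal to all ingredients, which by duality inside the symmetric matrices
means that the ingredients span them.
-/

namespace Matrix

section CommRing

variable {R ι n : Type*} [CommRing R] [Fintype n]

theorem trace_transpose_mul_vecMulVec (M : Matrix n n R) (u v : n → R) :
    (Mᵀ * vecMulVec u v).trace = u ⬝ᵥ M *ᵥ v := by
  simp only [trace, diag, mul_apply, transpose_apply, vecMulVec_apply, dotProduct, mulVec,
    Finset.mul_sum]
  rw [Finset.sum_comm]
  exact Finset.sum_congr rfl fun a _ => Finset.sum_congr rfl fun b _ => by ring

theorem mul_mul_transpose_apply (N : Matrix ι n R) (M : Matrix n n R) (j k : ι) :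
    (N * M * Nᵀ) j k = N j ⬝ᵥ M *ᵥ N k := by
  rw [Matrix.mul_assoc, mul_apply']
  rfl

theorem isSymm_mul_mul_transpose (N : Matrix ι n R) {M : Matrix n n R} (hM : M.IsSymm) :
    (N * M * Nᵀ).IsSymm := by
  simp [IsSymm, transpose_mul, hM.eq, Matrix.mul_assoc]

end CommRing

section Frobenius

variable {𝕜 n : Type*} [Field 𝕜] [Fintype n]

theorem exists_eq_trace_transpose_mul [DecidableEq n] (f : Module.Dual 𝕜 (Matrix n n 𝕜)) :
    ∃ F : Matrix n n 𝕜, ∀ P, f P = (Fᵀ * P).trace := by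
  refine ⟨of fun a b => f (single a b 1), fun P => ?_⟩
  induction P using Matrix.induction_on' with
  | h_zero => simp
  | h_add P Q hP hQ => rw [map_add, hP, hQ, Matrix.mul_add, trace_add]
  | h_std_basis a b x =>
    rw [trace_mul_single, show single a b x = x • single a b 1 by simp [smul_single], map_smul]
    simp [mul_comm]

theorem trace_mul_of_isSymm (F : Matrix n n 𝕜) {P : Matrix n n 𝕜} (hP : P.IsSymm) :
    (F * P).trace = (Fᵀ * P).trace := by
  rw [← trace_transpose, transpose_mul, hP.eq, trace_mul_comm]

variable [LinearOrder 𝕜] [IsStrictOrderedRing 𝕜]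

theorem trace_transpose_mul_self_eq_zero_iff {M : Matrix n n 𝕜} :
    (Mᵀ * M).trace = 0 ↔ M = 0 := by
  rw [← vec_dotProduct_vec, dotProduct_self_eq_zero, vec_eq_zero_iff]

theorem forall_isSymm_mem_span_iff [DecidableEq n] {S : Set (Matrix n n 𝕜)}
    (hS : ∀ P ∈ S, P.IsSymm) :
    (∀ M : Matrix n n 𝕜, M.IsSymm → M ∈ Submodule.span 𝕜 S) ↔
      ∀ M : Matrix n n 𝕜, M.IsSymm → (∀ P ∈ S, (Mᵀ * P).trace = 0) → M = 0 := by
  constructor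
  · intro hspan M hM horth
    let pairing : Matrix n n 𝕜 →ₗ[𝕜] 𝕜 := (traceLinearMap n 𝕜 𝕜).comp (mulLeftLinearMap n 𝕜 Mᵀ)
    have : Submodule.span 𝕜 S ≤ LinearMap.ker pairing := Submodule.span_le.2 horth
    exact trace_transpose_mul_self_eq_zero_iff.1 (this (hspan M hM))
  · intro horth M₀ hM₀
    by_contra hM₀S
    obtain ⟨f, hfM₀, hfS⟩ := Submodule.exists_dual_map_eq_bot_of_notMem hM₀S inferInstance
    obtain ⟨F, hF⟩ := exists_eq_trace_transpose_mul f
    have hsymm : ∀ P : Matrix n n 𝕜, P.IsSymm → ((F + Fᵀ)ᵀ * P).trace = 2 * f P := by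
      intro P hP
      rw [transpose_add, transpose_transpose, Matrix.add_mul, trace_add,
        trace_mul_of_isSymm F hP, hF]
      ring
    have hF0 : F + Fᵀ = 0 := horth _ (by simp [IsSymm, add_comm]) fun P hP => by
      rw [hsymm P (hS P hP), LinearMap.le_ker_iff_map.2 hfS (Submodule.subset_span hP), mul_zero]
    have := hsymm M₀ hM₀
    rw [hF0, transpose_zero, Matrix.zero_mul, trace_zero] at this
    exact hfM₀ (by linarith)

end Frobenius

section IndependentColumns

variable {𝕜 ι n : Type*} [Field 𝕜] [Fintype n]

theorem col_mul {κ : Type*} (N : Matrix ι n 𝕜) (C : Matrix n κ 𝕜) (k : κ) :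
    (N * C).col k = N *ᵥ C.col k :=
  rfl

theorem col_mul_mem_span_range_col {κ : Type*} (N : Matrix ι n 𝕜) (C : Matrix n κ 𝕜) (k : κ) :
    (N * C).col k ∈ Submodule.span 𝕜 (Set.range N.col) := by
  rw [← range_mulVecLin, col_mul]
  exact LinearMap.mem_range_self _ _

variable [Fintype ι]

theorem exists_mul_eq_one_of_linearIndependent_col [DecidableEq n] {N : Matrix ι n 𝕜}
    (hN : LinearIndependent 𝕜 N.col) : ∃ Q : Matrix n ι 𝕜, Q * N = 1 := by
  classical
  obtain ⟨g, hg⟩ := N.mulVecLin.exists_leftInverse_of_injective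
    (LinearMap.ker_eq_bot.2 (mulVec_injective_iff.2 hN))
  refine ⟨LinearMap.toMatrix' g, ?_⟩
  rw [← toLin'_apply'] at hg
  simpa [LinearMap.toMatrix'_comp] using congrArg LinearMap.toMatrix' hg

theorem mul_mul_transpose_eq_zero_iff {N : Matrix ι n 𝕜} (hN : LinearIndependent 𝕜 N.col)
    {M : Matrix n n 𝕜} : N * M * Nᵀ = 0 ↔ M = 0 := by
  classical
  refine ⟨fun h => ?_, fun h => by simp [h]⟩
  obtain ⟨Q, hQ⟩ := exists_mul_eq_one_of_linearIndependent_col hN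
  calc M = Q * N * M * (Q * N)ᵀ := by simp [hQ]
    _ = Q * (N * M * Nᵀ) * Qᵀ := by simp only [transpose_mul, Matrix.mul_assoc]
    _ = 0 := by simp [h]

theorem IsSymm.exists_isSymm_eq_mul_mul_transpose {N : Matrix ι n 𝕜}
    (hN : LinearIndependent 𝕜 N.col) {X : Matrix ι ι 𝕜} (hX : X.IsSymm)
    (hcol : ∀ k, X.col k ∈ Submodule.span 𝕜 (Set.range N.col)) :
    ∃ M : Matrix n n 𝕜, M.IsSymm ∧ X = N * M * Nᵀ := by
  classical
  obtain ⟨Q, hQ⟩ := exists_mul_eq_one_of_linearIndependent_col hN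
  have hNQX : N * Q * X = X := by
    suffices ∀ k, (N * Q * X).col k = X.col k from Matrix.ext fun j k => congrFun (this k) j
    intro k
    obtain ⟨y, hy⟩ := (N.range_mulVecLin ▸ hcol k : X.col k ∈ LinearMap.range N.mulVecLin)
    rw [col_mul, ← hy, mulVecLin_apply, mulVec_mulVec, Matrix.mul_assoc, hQ, Matrix.mul_one]
  refine ⟨Q * X * Qᵀ, ?_, ?_⟩
  · simp [IsSymm, transpose_mul, hX.eq, Matrix.mul_assoc]
  · calc X = Xᵀ := hX.eq.symm
      _ = (N * Q * X)ᵀ := by rw [hNQX]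
      _ = X * (N * Q)ᵀ := by rw [transpose_mul, hX.eq]
      _ = N * Q * X * (N * Q)ᵀ := by rw [hNQX]
      _ = N * (Q * X * Qᵀ) * Nᵀ := by simp only [transpose_mul, Matrix.mul_assoc]

end IndependentColumns

end Matrix

theorem Submodule.exists_linearIndependent_col_span_eq {𝕜 ι : Type*} [Field 𝕜] [Finite ι]
    (K : Submodule 𝕜 (ι → 𝕜)) {m : ℕ} (hm : Module.finrank 𝕜 K = m) :
    ∃ N : Matrix ι (Fin m) 𝕜, LinearIndependent 𝕜 N.col ∧
      Submodule.span 𝕜 (Set.range N.col) = K := by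
  let b := Module.finBasisOfFinrankEq 𝕜 K hm
  refine ⟨Matrix.of fun j c => (b c : ι → 𝕜) j, b.linearIndependent.map' K.subtype K.ker_subtype,
    ?_⟩
  change Submodule.span 𝕜 (Set.range (K.subtype ∘ b)) = K
  rw [Set.range_comp, Submodule.span_image, b.span_eq, Submodule.map_subtype_top]

def VanishesOnGraph (G : SimpleGraph V) (X : Matrix V V ℝ) : Prop :=
  (∀ j, X j j = 0) ∧ ∀ j k, G.Adj j k → X j k = 0

omit [Fintype V] [DecidableEq V] in
theorem InS.forall_mul_eq_zero_and_diag_iff {G : SimpleGraph V} {A : Matrix V V ℝ}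
    (hA : InS G A) {X : Matrix V V ℝ} :
    ((∀ j k, A j k * X j k = 0) ∧ ∀ j, X j j = 0) ↔ VanishesOnGraph G X := by
  refine ⟨fun ⟨hAX, hdiag⟩ => ⟨hdiag, fun j k hjk => ?_⟩,
    fun ⟨hdiag, hedge⟩ => ⟨fun j k => ?_, hdiag⟩⟩
  · exact (mul_eq_zero.1 (hAX j k)).resolve_left ((hA.2 j k hjk.ne).2 hjk)
  · rcases eq_or_ne j k with rfl | hjk
    · rw [hdiag, mul_zero]
    by_cases hAjk : A j k = 0
    · rw [hAjk, zero_mul]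
    · rw [hedge j k ((hA.2 j k hjk).1 hAjk), mul_zero]

omit [DecidableEq V] in
theorem forall_mul_apply_eq_zero_iff_col_mem {A : Matrix V V ℝ} {i : V}
    {K : Submodule ℝ (V → ℝ)} (hK : ∀ x, x ∈ K ↔ ∀ j, j ≠ i → A.mulVec x j = 0)
    (X : Matrix V V ℝ) : (∀ j k, j ≠ i → (A * X) j k = 0) ↔ ∀ k, X.col k ∈ K := by
  simp only [hK, ← Matrix.col_mul]
  exact forall_comm

omit [DecidableEq V] in
theorem hasSNIP_iff_of_linearIndependent_col {G : SimpleGraph V} {i : V} {A : Matrix V V ℝ}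
    (hA : InS G A) {K : Submodule ℝ (V → ℝ)}
    (hK : ∀ x, x ∈ K ↔ ∀ j, j ≠ i → A.mulVec x j = 0) {n : Type*} [Fintype n]
    {N : Matrix V n ℝ} (hN : LinearIndependent ℝ N.col)
    (hNK : Submodule.span ℝ (Set.range N.col) = K) :
    HasSNIP A i ↔ ∀ M : Matrix n n ℝ, M.IsSymm → VanishesOnGraph G (N * M * Nᵀ) → M = 0 := by
  refine ⟨fun hS M hM hvan => ?_, fun h X hX hAX hdiag hAXcol => ?_⟩
  · rw [← Matrix.mul_mul_transpose_eq_zero_iff hN]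
    obtain ⟨hAX, hdiag⟩ := hA.forall_mul_eq_zero_and_diag_iff.2 hvan
    refine hS _ ?_ hAX hdiag ((forall_mul_apply_eq_zero_iff_col_mem hK _).2 fun k => ?_)
    · exact Matrix.isSymm_mul_mul_transpose N hM
    · rw [← hNK, Matrix.mul_assoc]
      exact Matrix.col_mul_mem_span_range_col _ _ k
  · have hcol := (forall_mul_apply_eq_zero_iff_col_mem hK X).1 hAXcol
    obtain ⟨M, hM, rfl⟩ := hX.exists_isSymm_eq_mul_mul_transpose hN (hNK ▸ hcol)
    rw [h M hM (hA.forall_mul_eq_zero_and_diag_iff.1 ⟨hAX, hdiag⟩)]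
    simp

omit [Fintype V] [DecidableEq V] in
theorem givesFullRecipe_iff {m : ℕ} (G : SimpleGraph V) (N : Matrix V (Fin m) ℝ) :
    GivesFullRecipe G N ↔
      ∀ M : Matrix (Fin m) (Fin m) ℝ, M.IsSymm → VanishesOnGraph G (N * M * Nᵀ) → M = 0 := by
  have hingredients : GivesFullRecipe G N ↔ ∀ M : Matrix (Fin m) (Fin m) ℝ, M.IsSymm →
      M ∈ Submodule.span ℝ ({P | ∃ j, P = vecMulVec (N j) (N j)} ∪
        {P | ∃ j k, G.Adj j k ∧ P = vecMulVec (N j) (N k) + vecMulVec (N k) (N j)}) := Iff.rfl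
  rw [hingredients, Matrix.forall_isSymm_mem_span_iff]
  · refine forall₂_congr fun M hM => imp_congr_left ?_
    have hvertex : ∀ j, (Mᵀ * vecMulVec (N j) (N j)).trace = (N * M * Nᵀ) j j := fun j => by
      rw [trace_transpose_mul_vecMulVec, mul_mul_transpose_apply]
    have hedge : ∀ j k, (Mᵀ * (vecMulVec (N j) (N k) + vecMulVec (N k) (N j))).trace =
        2 * (N * M * Nᵀ) j k := fun j k => by
      rw [Matrix.mul_add, trace_add, trace_transpose_mul_vecMulVec, trace_transpose_mul_vecMulVec,
        ← mul_mul_transpose_apply, ← mul_mul_transpose_apply, (isSymm_mul_mul_transpose N hM).apply]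
      ring
    constructor
    · intro horth
      refine ⟨fun j => hvertex j ▸ horth _ (Or.inl ⟨j, rfl⟩), fun j k hjk => ?_⟩
      have := horth _ (Or.inr ⟨j, k, hjk, rfl⟩)
      rw [hedge] at this
      linarith
    · rintro ⟨hdiag, hadj⟩ P (⟨j, rfl⟩ | ⟨j, k, hjk, rfl⟩)
      · rw [hvertex, hdiag]
      · rw [hedge, hadj j k hjk, mul_zero]
  · rintro P (⟨j, rfl⟩ | ⟨j, k, -, rfl⟩)
    · exact transpose_vecMulVec _ _
    · simp [IsSymm, transpose_vecMulVec, add_comm]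

theorem stmt17 (G : SimpleGraph V) (i : V) (A : Matrix V V ℝ) (hA : InS G A)
    (K : Submodule ℝ (V → ℝ))
    (hK : ∀ x, x ∈ K ↔ ∀ j, j ≠ i → A.mulVec x j = 0)
    (m : ℕ) (hm : Module.finrank ℝ K = m) :
    HasSNIP A i ↔
      ∀ N : Matrix V (Fin m) ℝ,
        LinearIndependent ℝ (fun c : Fin m => Nᵀ c) →
        Submodule.span ℝ (Set.range fun c : Fin m => Nᵀ c) = K →
        GivesFullRecipe G N := by
  have hSNIP_iff_recipe : ∀ N : Matrix V (Fin m) ℝ, LinearIndependent ℝ N.col →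
      Submodule.span ℝ (Set.range N.col) = K → (HasSNIP A i ↔ GivesFullRecipe G N) :=
    fun N hN hNK => (hasSNIP_iff_of_linearIndependent_col hA hK hN hNK).trans
      (givesFullRecipe_iff G N).symm
  obtain ⟨N, hN, hNK⟩ := K.exists_linearIndependent_col_span_eq hm
  exact ⟨fun hS N' hN' hN'K => (hSNIP_iff_recipe N' hN' hN'K).1 hS,
    fun hrecipe => (hSNIP_iff_recipe N hN hNK).2 (hrecipe N hN hNK)⟩
end
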